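/- arXiv:1106.6342 — 7 statements merged into one kernel-verified Lean document; each statement's English description precedes it below -/
import Mathlib

section
/- If C is a common sublist of A and B that contains P as a contiguous infix (i.e., C = α ++ P ++ γ), then there is a common sublist C' of A and B of the same length, also of the form α ++ P ++ γ, whose embedding into A uses a compact appearance of P in A (the occurrence of P in A has minimal last index among occurrences starting at the same first index). -/
/-- Maximum length of a common sublist (LCS length) of `X` and `Y`. -/
def LLCS {σ : Type} [DecidableEq σ] (X Y : List σ) : ℕ :=
  ((X.sublists.filter (fun C => decide (C.Sublist Y))).map List.length).foldr max 0

/-- `I` is an appearance (embedding witness) of `P` in `A`: a strictly increasing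
list of (0-based) indices realizing `P` as a sublist of `A`. -/
def IsApp {σ : Type} (A P : List σ) (I : List ℕ) : Prop :=
  I.Chain' (· < ·) ∧ I.length = P.length ∧ ∀ t, t < I.length → A[I.getD t 0]? = P[t]?

/-- A greedy (compact) appearance: each next index is the least possible one. -/
def IsGreedy {σ : Type} (A P : List σ) (I : List ℕ) : Prop :=
  IsApp A P I ∧ ∀ t, t + 1 < I.length → ∀ k, I.getD t 0 < k → A[k]? = P[t+1]? →
    I.getD (t+1) 0 ≤ k

/-!
Take the leftmost (greedy) embedding of `C` itself into `A`. Its restriction to the block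
of `P` is again a greedy appearance of `P`, and by induction along `P` a greedy appearance
stays pointwise below any appearance of `P` that does not start earlier; in particular its
last index is minimal among appearances with the same first index.
-/

namespace IsApp

variable {σ : Type} {A C : List σ}

theorem nil_left_iff {I : List ℕ} : IsApp A [] I ↔ I = [] := by
  refine ⟨fun h => List.length_eq_zero_iff.mp h.2.1, ?_⟩
  rintro rfl
  exact ⟨List.isChain_nil, rfl, by simp⟩

theorem cons_cons_iff {c : σ} {i : ℕ} {I : List ℕ} :
    IsApp A (c :: C) (i :: I) ↔ A[i]? = some c ∧ (∀ j ∈ I.head?, i < j) ∧ IsApp A C I := by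
  simp only [IsApp, List.length_cons, Nat.add_right_cancel_iff]
  constructor
  · rintro ⟨hchain, hlen, hget⟩
    obtain ⟨hhead, hchain⟩ := List.isChain_cons.mp hchain
    exact ⟨by simpa using hget 0 (by simp), hhead, hchain, hlen,
      fun t ht => by simpa using hget (t + 1) (by omega)⟩
  · rintro ⟨hi, hhead, hchain, hlen, hget⟩
    refine ⟨List.isChain_cons.mpr ⟨hhead, hchain⟩, hlen, fun t ht => ?_⟩
    cases t with
    | zero => simpa using hi
    | succ t => simpa using hget t (by omega)

theorem exists_eq_cons {c : σ} {I : List ℕ} (h : IsApp A (c :: C) I) :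
    ∃ i I', I = i :: I' := by
  cases I with
  | nil => simp [IsApp] at h
  | cons i I' => exact ⟨i, I', rfl⟩

theorem getElem?_of_mem_head? {I : List ℕ} {i : ℕ} (h : IsApp A C I) (hi : i ∈ I.head?) :
    A[i]? = C[0]? := by
  cases I with
  | nil => simp at hi
  | cons j I =>
    obtain rfl : j = i := Option.some.inj hi
    simpa using h.2.2 0 (by simp)

theorem lt_of_mem {c : σ} {i j : ℕ} {I : List ℕ} (h : IsApp A (c :: C) (i :: I))
    (hj : j ∈ I) : i < j :=
  (List.pairwise_cons.mp (List.isChain_iff_pairwise.mp h.1)).1 j hj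

theorem of_sublist (h : C.Sublist A) : ∃ I, IsApp A C I := by
  obtain ⟨f, hf⟩ := List.sublist_iff_exists_fin_orderEmbedding_get_eq.mp h
  refine ⟨List.ofFn fun t => (f t : ℕ),
    List.isChain_ofFn.mpr fun t ht => f.strictMono (by simp), by simp, fun t ht => ?_⟩
  simp only [List.length_ofFn] at ht
  simpa [List.getD_eq_getElem?_getD, ht] using (hf ⟨t, ht⟩).symm

end IsApp

namespace IsGreedy

variable {σ : Type} {A C : List σ}

theorem nil : IsGreedy A [] [] :=
  ⟨IsApp.nil_left_iff.mpr rfl, by simp⟩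

theorem cons_cons_iff {c : σ} {i : ℕ} {I : List ℕ} :
    IsGreedy A (c :: C) (i :: I) ↔ IsApp A (c :: C) (i :: I) ∧
      (∀ j ∈ I.head?, ∀ k, i < k → A[k]? = C[0]? → j ≤ k) ∧ IsGreedy A C I := by
  constructor
  · rintro ⟨happ, hstep⟩
    refine ⟨happ, fun j hj k hik hk => ?_, (IsApp.cons_cons_iff.mp happ).2.2,
      fun t ht k hk hk' => hstep (t + 1) (by simpa using ht) k hk (by simpa using hk')⟩
    cases I with
    | nil => simp at hj
    | cons j' I =>
      obtain rfl : j' = j := Option.some.inj hj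
      exact hstep 0 (by simp) k hik (by simpa using hk)
  · rintro ⟨happ, hhead, -, hstep⟩
    refine ⟨happ, fun t ht k hk hk' => ?_⟩
    cases t with
    | zero =>
      cases I with
      | nil => simp at ht
      | cons j I => exact hhead j rfl k hk (by simpa using hk')
    | succ t => exact hstep t (by simpa using ht) k hk hk'

/-- The lower bound `s` makes the induction go through: after choosing the least admissible
first index `i`, the rest is a greedy appearance above `i + 1`. -/
theorem exists_of_isApp {J : List ℕ} {s : ℕ} (hJ : IsApp A C J) (hs : ∀ j ∈ J, s ≤ j) :
    ∃ I, IsGreedy A C I ∧ (∀ i ∈ I, s ≤ i) ∧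
      ∀ i ∈ I.head?, ∀ k, s ≤ k → A[k]? = C[0]? → i ≤ k := by
  classical
  induction C generalizing s J with
  | nil => exact ⟨[], nil, by simp, by simp⟩
  | cons c C ih =>
    obtain ⟨j, J, rfl⟩ := hJ.exists_eq_cons
    obtain ⟨hj, -, hJ'⟩ := IsApp.cons_cons_iff.mp hJ
    have hex : ∃ k, s ≤ k ∧ A[k]? = some c := ⟨j, hs j (by simp), hj⟩
    obtain ⟨hsi, hi⟩ := Nat.find_spec hex
    have hij : Nat.find hex ≤ j := Nat.find_min' hex ⟨hs j (by simp), hj⟩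
    obtain ⟨I, hI, hIge, hImin⟩ := ih hJ' (s := Nat.find hex + 1)
      fun j' hj' => hij.trans_lt (hJ.lt_of_mem hj')
    refine ⟨Nat.find hex :: I, cons_cons_iff.mpr ⟨IsApp.cons_cons_iff.mpr
      ⟨hi, fun j hj => hIge j (List.mem_of_mem_head? hj), hI.1⟩, hImin, hI⟩, ?_, ?_⟩
    · simp only [List.mem_cons, forall_eq_or_imp]
      exact ⟨hsi, fun i hi => by have := hIge i hi; omega⟩
    · rintro i ⟨⟩ k hk hk'
      exact Nat.find_min' hex ⟨hk, by simpa using hk'⟩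

theorem exists_of_sublist (h : C.Sublist A) : ∃ I, IsGreedy A C I := by
  obtain ⟨J, hJ⟩ := IsApp.of_sublist h
  obtain ⟨I, hI, -⟩ := exists_of_isApp hJ (s := 0) fun _ _ => Nat.zero_le _
  exact ⟨I, hI⟩

theorem take_append {X Y : List σ} {I : List ℕ} (h : IsGreedy A (X ++ Y) I) :
    IsGreedy A X (I.take X.length) := by
  induction X generalizing I with
  | nil => simpa using nil
  | cons x X ih =>
    obtain ⟨i, I, rfl⟩ := h.1.exists_eq_cons
    rw [List.cons_append] at h
    obtain ⟨happ, hmin, hrest⟩ := cons_cons_iff.mp h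
    obtain ⟨hi, hlt, -⟩ := IsApp.cons_cons_iff.mp happ
    have head_take : ∀ j ∈ (I.take X.length).head?, j ∈ I.head? ∧ X ≠ [] := by
      intro j hj
      rw [List.head?_take] at hj
      split_ifs at hj with hX
      · simp at hj
      · exact ⟨hj, by simpa using hX⟩
    rw [List.length_cons, List.take_succ_cons, cons_cons_iff, IsApp.cons_cons_iff]
    refine ⟨⟨hi, fun j hj => hlt j (head_take j hj).1, (ih hrest).1⟩, ?_, ih hrest⟩
    intro j hj k hik hk
    obtain ⟨hj, hX⟩ := head_take j hj
    refine hmin j hj k hik ?_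
    rwa [List.getElem?_append_left (List.length_pos_iff.mpr hX)]

theorem drop_append {X Y : List σ} {I : List ℕ} (h : IsGreedy A (X ++ Y) I) :
    IsGreedy A Y (I.drop X.length) := by
  induction X generalizing I with
  | nil => simpa using h
  | cons x X ih =>
    obtain ⟨i, I, rfl⟩ := h.1.exists_eq_cons
    simpa using ih (cons_cons_iff.mp h).2.2

theorem getLastD_le {I K : List ℕ} (hI : IsGreedy A C I) (hK : IsApp A C K)
    (hhead : ∀ i ∈ I.head?, ∀ k ∈ K.head?, i ≤ k) {d e : ℕ} (hde : d ≤ e) :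
    I.getLastD d ≤ K.getLastD e := by
  induction C generalizing I K d e with
  | nil =>
    rw [IsApp.nil_left_iff.mp hI.1, IsApp.nil_left_iff.mp hK]
    exact hde
  | cons c C ih =>
    obtain ⟨i, I, rfl⟩ := hI.1.exists_eq_cons
    obtain ⟨k, K, rfl⟩ := hK.exists_eq_cons
    obtain ⟨-, hImin, hI⟩ := cons_cons_iff.mp hI
    obtain ⟨-, hkK, hK⟩ := IsApp.cons_cons_iff.mp hK
    have hik : i ≤ k := hhead i rfl k rfl
    rw [List.getLastD_cons, List.getLastD_cons]
    exact ih hI hK (fun i' hi' k' hk' =>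
      hImin i' hi' k' (hik.trans_lt (hkK k' hk')) (hK.getElem?_of_mem_head? hk')) hik

end IsGreedy

theorem stmt4 {σ : Type} (A B P C al ga : List σ)
    (hC : C = al ++ P ++ ga) (hA : C.Sublist A) (hB : C.Sublist B) :
    ∃ (C' al' ga' : List σ) (I : List ℕ),
      C' = al' ++ P ++ ga' ∧ C'.length = C.length ∧
      C'.Sublist A ∧ C'.Sublist B ∧ IsApp A C' I ∧
      IsApp A P ((I.drop al'.length).take P.length) ∧
      (∀ K : List ℕ, IsApp A P K →
        K.head? = ((I.drop al'.length).take P.length).head? →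
        ((I.drop al'.length).take P.length).getLastD 0 ≤ K.getLastD 0) := by
  obtain ⟨I, hI⟩ := IsGreedy.exists_of_sublist hA
  have hP : IsGreedy A P ((I.drop al.length).take P.length) := by
    rw [hC, List.append_assoc] at hI
    exact hI.drop_append.take_append
  refine ⟨C, al, ga, I, hC, rfl, hA, hB, hI.1, hP.1, fun K hK hhead => ?_⟩
  refine hP.getLastD_le hK (fun i hi k hk => ?_) le_rfl
  rw [← hhead, hk] at hi
  exact (Option.some.inj hi).ge
end

section
/- For any lists A, B over Σ and index pairs: if C₁ is a common sublist of (take i A) and (take j B), C₂ is a common sublist of (drop i' A) and (drop j' B) with i ≤ i' and j ≤ j', and M is a common sublist of the middle segments (drop i (take i' A)) and (drop j (take j' B)), then C₁ ++ M ++ C₂ is a common sublist of A and B. -/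
namespace List

variable {α : Type*}

theorem take_append_drop_take_append_drop (l : List α) {i i' : ℕ} (h : i ≤ i') :
    l.take i ++ (l.take i').drop i ++ l.drop i' = l := by
  conv_rhs => rw [← take_append_drop i' l, ← take_append_drop i (l.take i'), take_take,
    min_eq_left h]

theorem append_append_sublist_of_sublist_take_drop {l C₁ M C₂ : List α} {i i' : ℕ}
    (h : i ≤ i') (h₁ : C₁ <+ l.take i) (hM : M <+ (l.take i').drop i)
    (h₂ : C₂ <+ l.drop i') : C₁ ++ M ++ C₂ <+ l :=
  take_append_drop_take_append_drop l h ▸ (h₁.append hM).append h₂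

end List

theorem stmt5 {σ : Type} (A B C₁ C₂ M : List σ) (i i' j j' : ℕ)
    (hii : i ≤ i') (hjj : j ≤ j')
    (h1A : C₁.Sublist (A.take i)) (h1B : C₁.Sublist (B.take j))
    (h2A : C₂.Sublist (A.drop i')) (h2B : C₂.Sublist (B.drop j'))
    (hMA : M.Sublist ((A.take i').drop i)) (hMB : M.Sublist ((B.take j').drop j)) :
    (C₁ ++ M ++ C₂).Sublist A ∧ (C₁ ++ M ++ C₂).Sublist B :=
  ⟨List.append_append_sublist_of_sublist_take_drop hii h1A hMA h2A,
    List.append_append_sublist_of_sublist_take_drop hjj h1B hMB h2B⟩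
end

section
/- Let A, B, P be lists with P nonempty, and write n = |A|, m = |B|, r = |P|. Define L to be the maximum length of a common sublist C of A and B such that P is an infix of C (assuming at least one exists). Then L = max over pairs of appearances of P in A (spanning positions i..i') and in B (spanning j..j') of [LLCS(A[1..i-1], B[1..j-1]) + r + LLCS(A[i'+1..n], B[j'+1..m])]. -/
section Helpers

lemma le_foldr_max {a : ℕ} : ∀ {l : List ℕ}, a ∈ l → a ≤ l.foldr max 0 := by
  intro l h
  induction l with
  | nil => cases h
  | cons b l ih =>
    rcases List.mem_cons.1 h with rfl | h
    · exact le_max_left _ _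
    · exact le_trans (ih h) (le_max_right _ _)

lemma foldr_max_mem : ∀ (l : List ℕ), l.foldr max 0 ∈ (0 :: l) := by
  intro l
  induction l with
  | nil => simp
  | cons b l ih =>
    simp only [List.foldr_cons]
    rcases le_total b (l.foldr max 0) with h | h
    · rw [max_eq_right h]
      rcases List.mem_cons.1 ih with h' | h' <;> simp_all
    · rw [max_eq_left h]; simp

lemma llcs_le {σ : Type} [DecidableEq σ] {X Y C : List σ} (h1 : C.Sublist X)
    (h2 : C.Sublist Y) : C.length ≤ LLCS X Y := by
  apply le_foldr_max
  apply List.mem_map.2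
  exact ⟨C, List.mem_filter.2 ⟨List.mem_sublists.2 h1, by simpa using h2⟩, rfl⟩

lemma llcs_exists {σ : Type} [DecidableEq σ] (X Y : List σ) :
    ∃ C : List σ, C.Sublist X ∧ C.Sublist Y ∧ C.length = LLCS X Y := by
  have hm := List.mem_cons.1
      (foldr_max_mem ((X.sublists.filter (fun C => decide (C.Sublist Y))).map List.length))
  rcases hm with h | h
  · exact ⟨[], List.nil_sublist _, List.nil_sublist _, h.symm⟩
  · rcases List.mem_map.1 h with ⟨C, hC, hlen⟩
    rcases List.mem_filter.1 hC with ⟨h1, h2⟩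
    exact ⟨C, List.mem_sublists.1 h1, by simpa using h2, hlen⟩

lemma getLastD_mem : ∀ (l : List ℕ) (a : ℕ), l.getLastD a ∈ a :: l := by
  intro l
  induction l with
  | nil => intro a; simp
  | cons b l ih =>
    intro a
    rw [List.getLastD_cons]
    rcases List.mem_cons.1 (ih b) with h | h
    · rw [h]; exact List.mem_cons_of_mem _ List.mem_cons_self
    · exact List.mem_cons_of_mem _ (List.mem_cons_of_mem _ h)

lemma getLastD_map_succ : ∀ (l : List ℕ) (d : ℕ),
    (l.map (· + 1)).getLastD (d + 1) = l.getLastD d + 1 := by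
  intro l
  induction l with
  | nil => intro d; simp
  | cons b l ih => intro d; simp only [List.map_cons, List.getLastD_cons]; exact ih b

lemma map_succ_getLastD {I : List ℕ} (h : I ≠ []) :
    (I.map (· + 1)).getLastD 0 = I.getLastD 0 + 1 := by
  rcases I with _ | ⟨i, I'⟩
  · exact absurd rfl h
  · simp only [List.map_cons, List.getLastD_cons]
    exact getLastD_map_succ I' i

lemma isApp_shift {σ : Type} {A P : List σ} {I : List ℕ} (a : σ) (h : IsApp A P I) :
    IsApp (a :: A) P (I.map (· + 1)) := by
  obtain ⟨hc, hl, hg⟩ := h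
  refine ⟨(List.isChain_map _).2 (by simpa [List.Chain'] using hc), by simpa using hl, ?_⟩
  intro t ht
  rw [List.length_map] at ht
  rw [List.getD_eq_getElem _ _ (by simpa using ht), List.getElem_map]
  rw [List.getElem?_cons_succ]
  rw [← List.getD_eq_getElem _ 0 ht]
  exact hg t ht

lemma isApp_cons {σ : Type} {A P : List σ} {I : List ℕ} (p : σ) (h : IsApp A P I) :
    IsApp (p :: A) (p :: P) (0 :: I.map (· + 1)) := by
  obtain ⟨hc', hl', hg'⟩ := isApp_shift (a := p) h
  refine ⟨?_, by simpa using hl', ?_⟩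
  · refine List.isChain_cons.2 ⟨?_, hc'⟩
    intro y hy
    rcases I with _ | ⟨i, I'⟩
    · simp at hy
    · simp at hy; omega
  · intro t ht
    rcases t with _ | t
    · simp
    · rw [List.getD_cons_succ, List.getElem?_cons_succ]
      exact hg' t (by simpa using Nat.succ_lt_succ_iff.1 (by simpa using ht))

lemma isApp_tail {σ : Type} {A P' : List σ} {p : σ} {i : ℕ} {I' : List ℕ}
    (h : IsApp A (p :: P') (i :: I')) : IsApp A P' I' ∧ A[i]? = some p := by
  obtain ⟨hc, hl, hg⟩ := h
  refine ⟨⟨hc.tail, by simpa using hl, ?_⟩, ?_⟩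
  · intro t ht
    have := hg (t + 1) (by simpa using Nat.succ_lt_succ ht)
    simpa using this
  · have := hg 0 (by simp)
    simpa using this

lemma app_middle {σ : Type} {A : List σ} : ∀ (I : List ℕ) (P : List σ) (n : ℕ),
    IsApp A P I → (∀ x ∈ I, n ≤ x) →
    P.Sublist ((A.drop n).take (I.getLastD 0 + 1 - n)) := by
  intro I
  induction I with
  | nil =>
    intro P n h _
    have : P = [] := by
      have := h.2.1; simpa [List.length_eq_zero_iff] using this.symm
    simp [this]
  | cons i I' ih =>
    intro P n h hn
    rcases P with _ | ⟨p, P'⟩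
    · exact absurd h.2.1 (by simp)
    obtain ⟨h', hgp⟩ := isApp_tail h
    have hil : i < A.length := (List.getElem?_eq_some_iff.1 hgp).1
    have hni : n ≤ i := hn i (by simp)
    have hpair : ∀ x ∈ I', i < x := by
      have := (List.isChain_iff_pairwise.1 h.1)
      exact fun x hx => (List.pairwise_cons.1 this).1 x hx
    have hlast : i ≤ (i :: I').getLastD 0 := by
      rw [List.getLastD_cons]
      rcases List.mem_cons.1 (getLastD_mem I' i) with hh | hh
      · omega
      · exact le_of_lt (hpair _ hh)
    have hAget : A[i] = p := by
      obtain ⟨hh, hv⟩ := List.getElem?_eq_some_iff.1 hgp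
      simpa using hv
    have hAi : A.drop i = p :: A.drop (i + 1) := by
      rw [List.drop_eq_getElem_cons hil, hAget]
    have hdropn : A.drop n = (A.take i).drop n ++ (p :: A.drop (i + 1)) := by
      conv_lhs => rw [← List.take_append_drop i A]
      rw [List.drop_append, hAi]
      congr 1
      have h0 : n - (A.take i).length = 0 := by rw [List.length_take]; omega
      rw [h0, List.drop_zero]
    have hDlen : ((A.take i).drop n).length = i - n := by
      rw [List.length_drop, List.length_take]; omega
    set l := (i :: I').getLastD 0 with hldef
    have htake : (A.drop n).take (l + 1 - n) =
        (A.take i).drop n ++ (p :: (A.drop (i + 1)).take (l - i)) := by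
      rw [hdropn, List.take_append, hDlen]
      rw [List.take_of_length_le (le_of_eq_of_le hDlen (by omega))]
      have h1 : l + 1 - n - (i - n) = (l - i) + 1 := by omega
      rw [h1, List.take_succ_cons]
    rw [htake]
    rcases I' with _ | ⟨c, I''⟩
    · have hP' : P' = [] := by
        have := h'.2.1
        simpa [List.length_eq_zero_iff] using this.symm
      subst hP'
      have hli : l - i = 0 := by
        have : l = i := by rw [hldef]; simp
        omega
      rw [hli]
      simpa using List.sublist_append_right ((A.take i).drop n) [p]
    · have hIH := ih P' (i + 1) h' (fun x hx => hpair x hx)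
      have hll : (c :: I'').getLastD 0 + 1 - (i + 1) = l - i := by
        simp only [hldef, List.getLastD_cons] at hlast ⊢
        omega
      rw [hll] at hIH
      exact (hIH.cons₂ p).trans (List.sublist_append_right _ _)

lemma exists_app {σ : Type} : ∀ (A C al P ga : List σ), P ≠ [] → C = al ++ (P ++ ga) →
    C.Sublist A →
    ∃ I : List ℕ, IsApp A P I ∧ I ≠ [] ∧ al.Sublist (A.take (I.headD 0)) ∧
      ga.Sublist (A.drop (I.getLastD 0 + 1)) := by
  intro A
  induction A with
  | nil =>
    intro C al P ga hP hC h
    rw [List.sublist_nil] at h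
    subst h
    rcases List.append_eq_nil_iff.1 hC.symm with ⟨-, h2⟩
    rcases List.append_eq_nil_iff.1 h2 with ⟨h3, -⟩
    exact absurd h3 hP
  | cons a A ihA =>
    intro C al P ga hP hC h
    cases h with
    | cons _ h' =>
      obtain ⟨I, hI, hne, hal, hga⟩ := ihA C al P ga hP hC h'
      refine ⟨I.map (· + 1), isApp_shift a hI, by simpa using hne, ?_, ?_⟩
      · rcases I with _ | ⟨i, I'⟩
        · exact absurd rfl hne
        · simpa using hal.cons a
      · rw [map_succ_getLastD hne, List.drop_succ_cons]
        exact hga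
    | cons_cons _ h' =>
      rcases al with _ | ⟨x, al'⟩
      · rcases P with _ | ⟨p, P'⟩
        · exact absurd rfl hP
        simp only [List.nil_append, List.cons_append, List.cons.injEq] at hC
        obtain ⟨rfl, hl₁⟩ := hC
        rcases P' with _ | ⟨q, P''⟩
        · refine ⟨[0], ?_, by simp, by simp, ?_⟩
          · refine ⟨by simp [List.Chain'], by simp, ?_⟩
            intro t ht
            have ht0 : t = 0 := by simpa using Nat.lt_one_iff.1 (by simpa using ht)
            subst ht0
            simp
          · simp only [List.getLastD_cons]
            simpa [hl₁] using h'
        · obtain ⟨I', hI', hne', -, hga'⟩ :=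
            ihA _ [] (q :: P'') ga (by simp) (by simpa using hl₁) h'
          refine ⟨0 :: I'.map (· + 1), isApp_cons a hI', by simp, by simp, ?_⟩
          rw [List.getLastD_cons, map_succ_getLastD hne', List.drop_succ_cons]
          exact hga'
      · simp only [List.cons_append, List.cons.injEq] at hC
        obtain ⟨rfl, hl₁⟩ := hC
        obtain ⟨I, hI, hne, hal, hga⟩ := ihA _ al' P ga hP hl₁ h'
        refine ⟨I.map (· + 1), isApp_shift a hI, by simpa using hne, ?_, ?_⟩
        · rcases I with _ | ⟨i, I'⟩
          · exact absurd rfl hne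
          · simpa using hal.cons₂ a
        · rw [map_succ_getLastD hne, List.drop_succ_cons]
          exact hga

lemma app_split {σ : Type} {A P : List σ} {I : List ℕ} (hP : P ≠ []) (hI : IsApp A P I)
    {al ga : List σ} (hal : al.Sublist (A.take (I.headD 0)))
    (hga : ga.Sublist (A.drop (I.getLastD 0 + 1))) :
    (al ++ (P ++ ga)).Sublist A := by
  rcases I with _ | ⟨i, I'⟩
  · exact absurd (by simpa [List.length_eq_zero_iff] using hI.2.1.symm : P = []) hP
  have hpair : ∀ x ∈ I', i < x :=
    fun x hx => (List.pairwise_cons.1 (List.isChain_iff_pairwise.1 hI.1)).1 x hx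
  have hall : ∀ x ∈ (i :: I'), i ≤ x := by
    intro x hx
    rcases List.mem_cons.1 hx with rfl | hx
    · exact le_rfl
    · exact le_of_lt (hpair x hx)
  have hmid := app_middle (i :: I') P i hI hall
  set l := (i :: I').getLastD 0 with hldef
  have hil : i ≤ l := by
    rw [hldef, List.getLastD_cons]
    rcases List.mem_cons.1 (getLastD_mem I' i) with hh | hh
    · omega
    · exact le_of_lt (hpair _ hh)
  have h2 : (A.drop i).drop (l + 1 - i) = A.drop (l + 1) := by
    rw [List.drop_drop]; congr 1; omega
  have hs : (al ++ (P ++ ga)).Sublist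
      (A.take i ++ ((A.drop i).take (l + 1 - i) ++ (A.drop i).drop (l + 1 - i))) :=
    List.Sublist.append hal (List.Sublist.append hmid (h2 ▸ hga))
  rwa [List.take_append_drop, List.take_append_drop] at hs

end Helpers

theorem stmt6 {σ : Type} [DecidableEq σ] (A B P : List σ) (hP : P ≠ [])
    (hPA : P.Sublist A) (hPB : P.Sublist B) (L : ℕ)
    (hL : IsGreatest
      {l : ℕ | ∃ C al ga : List σ, C = al ++ P ++ ga ∧ C.Sublist A ∧ C.Sublist B ∧
        C.length = l} L) :
    IsGreatest
      {v : ℕ | ∃ I J : List ℕ, IsApp A P I ∧ IsApp B P J ∧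
        v = LLCS (A.take (I.headD 0)) (B.take (J.headD 0)) + P.length +
            LLCS (A.drop (I.getLastD 0 + 1)) (B.drop (J.getLastD 0 + 1))} L := by
  obtain ⟨hLmem, hLub⟩ := hL
  have hub : ∀ v ∈ {v : ℕ | ∃ I J : List ℕ, IsApp A P I ∧ IsApp B P J ∧
      v = LLCS (A.take (I.headD 0)) (B.take (J.headD 0)) + P.length +
          LLCS (A.drop (I.getLastD 0 + 1)) (B.drop (J.getLastD 0 + 1))}, v ≤ L := by
    rintro v ⟨I, J, hIA, hJB, rfl⟩
    obtain ⟨al, hal1, hal2, hal3⟩ := llcs_exists (A.take (I.headD 0)) (B.take (J.headD 0))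
    obtain ⟨ga, hga1, hga2, hga3⟩ :=
      llcs_exists (A.drop (I.getLastD 0 + 1)) (B.drop (J.getLastD 0 + 1))
    have hCA : (al ++ (P ++ ga)).Sublist A := app_split hP hIA hal1 hga1
    have hCB : (al ++ (P ++ ga)).Sublist B := app_split hP hJB hal2 hga2
    have hle := hLub ⟨al ++ P ++ ga, al, ga, rfl,
      by simpa [List.append_assoc] using hCA, by simpa [List.append_assoc] using hCB, rfl⟩
    rw [← hal3, ← hga3]
    simp only [List.length_append] at hle
    omega
  refine ⟨?_, fun v hv => hub v hv⟩
  obtain ⟨C, al, ga, hCdef, hCA, hCB, hClen⟩ := hLmem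
  obtain ⟨I, hIA, -, halA, hgaA⟩ :=
    exists_app A C al P ga hP (by rw [hCdef, List.append_assoc]) hCA
  obtain ⟨J, hJB, -, halB, hgaB⟩ :=
    exists_app B C al P ga hP (by rw [hCdef, List.append_assoc]) hCB
  have hwmem : (LLCS (A.take (I.headD 0)) (B.take (J.headD 0)) + P.length +
      LLCS (A.drop (I.getLastD 0 + 1)) (B.drop (J.getLastD 0 + 1))) ∈
      {v : ℕ | ∃ I J : List ℕ, IsApp A P I ∧ IsApp B P J ∧
        v = LLCS (A.take (I.headD 0)) (B.take (J.headD 0)) + P.length +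
            LLCS (A.drop (I.getLastD 0 + 1)) (B.drop (J.getLastD 0 + 1))} :=
    ⟨I, J, hIA, hJB, rfl⟩
  have hwle := hub _ hwmem
  have h1 : al.length ≤ LLCS (A.take (I.headD 0)) (B.take (J.headD 0)) := llcs_le halA halB
  have h2 : ga.length ≤ LLCS (A.drop (I.getLastD 0 + 1)) (B.drop (J.getLastD 0 + 1)) :=
    llcs_le hgaA hgaB
  have hlen : C.length = al.length + P.length + ga.length := by
    rw [hCdef]; simp only [List.length_append]
  have hEq : (LLCS (A.take (I.headD 0)) (B.take (J.headD 0)) + P.length +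
      LLCS (A.drop (I.getLastD 0 + 1)) (B.drop (J.getLastD 0 + 1))) = L := by
    omega
  exact hEq ▸ hwmem
end

section
/- Standard LCS recurrence: for nonempty lists A = A' ++ [x] and B = B' ++ [y], if x = y then LLCS(A,B) = LLCS(A',B') + 1, and if x ≠ y then LLCS(A,B) = max(LLCS(A',B), LLCS(A,B')). -/
/-!
A common sublist of `A' ++ [x]` and `B' ++ [y]` either is a sublist of `A'` or of `B'`, or ends in
`x`, matched against both last letters, which forces `x = y`. Together with the fact that
appending one letter to either list raises `LLCS` by at most one, this gives both upper bounds;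
the lower bounds come from extending an optimal common sublist of `A'` and `B'` by `x`, resp.
from monotonicity of `LLCS` under sublists.
-/

open List

theorem List.sublist_append_singleton_iff {α : Type*} {l l' : List α} {a : α} :
    l <+ l' ++ [a] ↔ l <+ l' ∨ ∃ r, l = r ++ [a] ∧ r <+ l' := by
  rw [← reverse_sublist, reverse_append, reverse_singleton, singleton_append,
    sublist_cons_iff]
  refine or_congr (by rw [sublist_reverse_iff, reverse_reverse]) ⟨?_, ?_⟩
  · rintro ⟨r, hr, hsub⟩
    refine ⟨r.reverse, ?_, by rwa [← reverse_sublist, reverse_reverse]⟩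
    rw [← reverse_reverse l, hr, reverse_cons]
  · rintro ⟨r, rfl, hsub⟩
    exact ⟨r.reverse, by simp, reverse_sublist.2 hsub⟩

theorem common_sublist_append_singleton_cases {α : Type*} {A B C : List α}
    {x y : α} (hA : C <+ A ++ [x]) (hB : C <+ B ++ [y]) :
    C <+ A ∨ C <+ B ∨ x = y ∧ ∃ r, C = r ++ [x] ∧ r <+ A ∧ r <+ B := by
  rcases sublist_append_singleton_iff.1 hA with hA | ⟨r, rfl, hrA⟩
  · exact .inl hA
  rcases sublist_append_singleton_iff.1 hB with hB | ⟨s, hrs, hsB⟩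
  · exact .inr (.inl hB)
  obtain ⟨rfl, rfl⟩ := append_singleton_inj.1 hrs
  exact .inr (.inr ⟨rfl, r, rfl, hrA, hsB⟩)

section LLCS

variable {σ : Type} [DecidableEq σ] {X Y X' Y' C : List σ}

lemma mem_LLCS_lengths {n : ℕ} :
    n ∈ (X.sublists.filter (fun C => decide (C.Sublist Y))).map List.length ↔
      ∃ C, C <+ X ∧ C <+ Y ∧ C.length = n := by
  simp [and_assoc]

lemma le_LLCS (hX : C <+ X) (hY : C <+ Y) : C.length ≤ LLCS X Y :=
  le_max_of_le (mem_LLCS_lengths.2 ⟨C, hX, hY, rfl⟩) le_rfl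

lemma LLCS_le {n : ℕ} (h : ∀ C, C <+ X → C <+ Y → C.length ≤ n) : LLCS X Y ≤ n :=
  max_le_of_forall_le _ _ fun _ hm ↦
    let ⟨C, hX, hY, hC⟩ := mem_LLCS_lengths.1 hm; hC ▸ h C hX hY

lemma exists_length_eq_LLCS (X Y : List σ) : ∃ C, C <+ X ∧ C <+ Y ∧ C.length = LLCS X Y := by
  have hne : (X.sublists.filter (fun C => decide (C.Sublist Y))).map List.length ≠ [] :=
    ne_nil_of_mem (mem_LLCS_lengths.2 ⟨[], nil_sublist X, nil_sublist Y, rfl⟩)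
  exact mem_LLCS_lengths.1 (maximum_mem (foldr_max_of_ne_nil hne).symm)

lemma LLCS_comm (X Y : List σ) : LLCS X Y = LLCS Y X :=
  le_antisymm (LLCS_le fun _ hX hY ↦ le_LLCS hY hX) (LLCS_le fun _ hY hX ↦ le_LLCS hX hY)

lemma LLCS_mono (hX : X <+ X') (hY : Y <+ Y') : LLCS X Y ≤ LLCS X' Y' := by
  obtain ⟨C, hCX, hCY, hC⟩ := exists_length_eq_LLCS X Y
  exact hC ▸ le_LLCS (hCX.trans hX) (hCY.trans hY)

lemma LLCS_append_singleton_right_le (X Y : List σ) (a : σ) :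
    LLCS X (Y ++ [a]) ≤ LLCS X Y + 1 := by
  refine LLCS_le fun C hX hY ↦ ?_
  rcases sublist_append_singleton_iff.1 hY with hY | ⟨r, rfl, hr⟩
  · exact (le_LLCS hX hY).trans (Nat.le_succ _)
  · simpa using le_LLCS ((sublist_append_left r [a]).trans hX) hr

lemma LLCS_append_singleton_left_le (X Y : List σ) (a : σ) :
    LLCS (X ++ [a]) Y ≤ LLCS X Y + 1 := by
  simpa only [LLCS_comm _ Y] using LLCS_append_singleton_right_le Y X a

end LLCS

theorem stmt10 {σ : Type} [DecidableEq σ] (A' B' : List σ) (x y : σ) :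
    (x = y → LLCS (A' ++ [x]) (B' ++ [y]) = LLCS A' B' + 1) ∧
    (x ≠ y → LLCS (A' ++ [x]) (B' ++ [y]) =
      max (LLCS A' (B' ++ [y])) (LLCS (A' ++ [x]) B')) := by
  constructor
  · rintro rfl
    refine le_antisymm (LLCS_le fun C hA hB ↦ ?_) ?_
    · rcases common_sublist_append_singleton_cases hA hB with
        hA | hB | ⟨-, r, rfl, hrA, hrB⟩
      · exact (le_LLCS hA hB).trans (LLCS_append_singleton_right_le A' B' x)
      · exact (le_LLCS hA hB).trans (LLCS_append_singleton_left_le A' B' x)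
      · simpa using le_LLCS hrA hrB
    · obtain ⟨C, hA, hB, hC⟩ := exists_length_eq_LLCS A' B'
      simpa [hC] using le_LLCS (hA.append_right [x]) (hB.append_right [x])
  · intro hxy
    refine le_antisymm (LLCS_le fun C hA hB ↦ ?_) ?_
    · rcases common_sublist_append_singleton_cases hA hB with
        hA | hB | ⟨hxy', -⟩
      · exact (le_LLCS hA hB).trans (le_max_left _ _)
      · exact (le_LLCS hA hB).trans (le_max_right _ _)
      · exact absurd hxy' hxy
    · exact max_le (LLCS_mono (sublist_append_left A' [x]) (Sublist.refl _))
        (LLCS_mono (Sublist.refl _) (sublist_append_left B' [y]))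
end

section
/- Lower bound direction of the split formula: for any i ≤ i' and j ≤ j' such that P is simultaneously realizable in the segments A[i..i'] and B[j..j'] (P is a sublist of both segments with the first symbol at the segment start and the last at the segment end), there exists a common sublist C of A and B with P as an infix and |C| ≥ LLCS(A[1..i-1], B[1..j-1]) + r + LLCS(A[i'+1..n], B[j'+1..m]). -/
/-! An LCS `al` of the two prefixes and an LCS `ga` of the two suffixes, placed around `P`, give
the common sublist `al ++ P ++ ga`: the appearances of `P` in `A` and `B` confine `P` to the
segments `A[i..i']` and `B[j..j']`, which separate the prefixes from the suffixes. -/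

open List

theorem exists_sublist_sublist_length_eq_LLCS {σ : Type} [DecidableEq σ] (X Y : List σ) :
    ∃ Z : List σ, Z <+ X ∧ Z <+ Y ∧ Z.length = LLCS X Y := by
  have hne : (X.sublists.filter (fun C => decide (C <+ Y))).map List.length ≠ [] := by
    simp only [ne_eq, List.map_eq_nil_iff, List.filter_eq_nil_iff, not_forall, not_not]
    exact ⟨[], by simp, by simp⟩
  obtain ⟨Z, hZ, hlen⟩ := List.mem_map.mp (List.maximum_mem (List.foldr_max_of_ne_nil hne).symm)
  rw [List.mem_filter, List.mem_sublists, decide_eq_true_iff] at hZ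
  exact ⟨Z, hZ.1, hZ.2, hlen⟩

theorem List.append_append_sublist_of_le {α : Type*} {l al m ga : List α} {i k : ℕ} (hik : i ≤ k)
    (hal : al <+ l.take i) (hm : m <+ (l.take k).drop i) (hga : ga <+ l.drop k) :
    al ++ m ++ ga <+ l := by
  have hsplit : l.take i ++ (l.take k).drop i ++ l.drop k = l := by
    have htake : l.take i = (l.take k).take i := by rw [List.take_take, min_eq_left hik]
    rw [htake, List.take_append_drop, List.take_append_drop]
  exact hsplit ▸ (hal.append hm).append hga

theorem IsApp.sublist_drop_take {σ : Type} {A P : List σ} {I : List ℕ} {i i' : ℕ}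
    (h : IsApp A P I) (hi : I.head? = some i) (hi' : I.getLast? = some i') :
    P <+ (A.take (i' + 1)).drop i := by
  obtain ⟨hchain, hlen, hget⟩ := h
  have hsorted : I.SortedLT := List.sortedLT_iff_isChain.mpr hchain
  have hpos : 0 < I.length := List.length_pos_iff.mpr (by rintro rfl; simp at hi)
  have hfirst : I[0] = i := by simpa [List.head?_eq_getElem?, hpos] using hi
  have hlast : I[I.length - 1] = i' := by simpa [List.getLast?_eq_getElem?, hpos] using hi'
  have hbounds (t : ℕ) (ht : t < I.length) : i ≤ I[t] ∧ I[t] ≤ i' := by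
    rw [← hfirst, ← hlast, hsorted.getElem_le_getElem_iff, hsorted.getElem_le_getElem_iff]
    omega
  have hgetElem (t : ℕ) (ht : t < I.length) : A[I[t]]? = P[t]? := by
    simpa [List.getD_eq_getElem?_getD, ht] using hget t ht
  have hi'A : i' < A.length := by
    have := hgetElem _ (Nat.sub_lt hpos one_pos)
    rw [hlast, List.getElem?_eq_getElem (by omega : I.length - 1 < P.length)] at this
    exact (List.getElem?_eq_some_iff.mp this).1
  have hidx (t : Fin P.length) : (t : ℕ) < I.length := t.2.trans_eq hlen.symm
  have hlt (t : Fin P.length) : I[(t : ℕ)]'(hidx t) - i < ((A.take (i' + 1)).drop i).length := by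
    have ht := hbounds t (hidx t)
    simp only [List.length_drop, List.length_take]
    omega
  let f (t : Fin P.length) : Fin ((A.take (i' + 1)).drop i).length := ⟨_, hlt t⟩
  have hf : StrictMono f := fun s t hst => by
    have hs := hbounds s (hidx s)
    have hIst : I[(s : ℕ)]'(hidx s) < I[(t : ℕ)]'(hidx t) := hsorted.getElem_lt_getElem_iff.mpr hst
    simp only [f, Fin.mk_lt_mk]
    omega
  refine List.sublist_iff_exists_fin_orderEmbedding_get_eq.mpr
    ⟨OrderEmbedding.ofStrictMono f hf, fun t => Option.some.inj ?_⟩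
  rw [List.get_eq_getElem, List.get_eq_getElem, ← List.getElem?_eq_getElem,
    ← List.getElem?_eq_getElem, OrderEmbedding.coe_ofStrictMono, List.getElem?_drop,
    List.getElem?_take_of_lt (by have := hbounds t (hidx t); simp only [f]; omega)]
  simp only [f, Nat.add_sub_cancel' (hbounds t (hidx t)).1]
  exact (hgetElem t (hidx t)).symm

theorem stmt12_general {σ : Type} [DecidableEq σ] (A B P : List σ)
    (i i' j j' : ℕ) (hii : i ≤ i') (hjj : j ≤ j')
    (hA : ∃ I : List ℕ, IsApp A P I ∧ I.head? = some i ∧ I.getLast? = some i')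
    (hB : ∃ J : List ℕ, IsApp B P J ∧ J.head? = some j ∧ J.getLast? = some j') :
    ∃ C al ga : List σ, C = al ++ P ++ ga ∧ C.Sublist A ∧ C.Sublist B ∧
      LLCS (A.take i) (B.take j) + P.length +
        LLCS (A.drop (i' + 1)) (B.drop (j' + 1)) ≤ C.length := by
  obtain ⟨I, hI, hIi, hIi'⟩ := hA
  obtain ⟨J, hJ, hJj, hJj'⟩ := hB
  obtain ⟨al, halA, halB, hal⟩ := exists_sublist_sublist_length_eq_LLCS (A.take i) (B.take j)
  obtain ⟨ga, hgaA, hgaB, hga⟩ :=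
    exists_sublist_sublist_length_eq_LLCS (A.drop (i' + 1)) (B.drop (j' + 1))
  refine ⟨al ++ P ++ ga, al, ga, rfl,
    List.append_append_sublist_of_le (by omega) halA (hI.sublist_drop_take hIi hIi') hgaA,
    List.append_append_sublist_of_le (by omega) halB (hJ.sublist_drop_take hJj hJj') hgaB, ?_⟩
  rw [List.length_append, List.length_append, hal, hga]

theorem stmt12 {σ : Type} [DecidableEq σ] (A B P : List σ) (hP : P ≠ [])
    (i i' j j' : ℕ) (hii : i ≤ i') (hjj : j ≤ j')
    (hA : ∃ I : List ℕ, IsApp A P I ∧ I.head? = some i ∧ I.getLast? = some i')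
    (hB : ∃ J : List ℕ, IsApp B P J ∧ J.head? = some j ∧ J.getLast? = some j') :
    ∃ C al ga : List σ, C = al ++ P ++ ga ∧ C.Sublist A ∧ C.Sublist B ∧
      LLCS (A.take i) (B.take j) + P.length +
        LLCS (A.drop (i' + 1)) (B.drop (j' + 1)) ≤ C.length :=
  stmt12_general A B P i i' j j' hii hjj hA hB
end

section
/- Upper bound direction of the split formula: for any common sublist C of A and B with P as an infix (C = α ++ P ++ γ), there exist indices i ≤ i' in A and j ≤ j' in B such that P appears in A spanning i..i' and in B spanning j..j', |α| ≤ LLCS(A[1..i-1], B[1..j-1]), and |γ| ≤ LLCS(A[i'+1..n], B[j'+1..m]); hence |C| ≤ LLCS(A[1..i-1], B[1..j-1]) + r + LLCS(A[i'+1..n], B[j'+1..m]). -/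
/-!
Split `A = A₁ ++ A₂ ++ A₃` with `al <+ A₁`, `P <+ A₂` and `ga <+ A₃`. An appearance of `P`
inside the block `A₂` starts at an index `i ≥ |A₁|` and ends at an index `i' < |A₁| + |A₂|`, so
`al` still embeds in `A.take i` and `ga` in `A.drop (i' + 1)`. Doing the same in `B` makes `al`
and `ga` common sublists of the matching prefixes and suffixes, which bounds them by the LLCS
values.
-/

open List

lemma length_le_LLCS {σ : Type} [DecidableEq σ] {C X Y : List σ} (hX : C <+ X) (hY : C <+ Y) :
    C.length ≤ LLCS X Y :=
  le_max_of_le (mem_map_of_mem <| mem_filter.2 ⟨mem_sublists.2 hX, decide_eq_true hY⟩) le_rfl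

lemma isApp_iff {σ : Type} {A P : List σ} {I : List ℕ} :
    IsApp A P I ↔ I.IsChain (· < ·) ∧ I.length = P.length ∧
      ∀ t (ht : t < I.length), A[I[t]]? = P[t]? := by
  refine and_congr Iff.rfl (and_congr_right fun _ => ?_)
  simp +contextual

namespace IsApp

variable {σ : Type} {A P : List σ} {I : List ℕ}

lemma lt_length (h : IsApp A P I) {k : ℕ} (hk : k ∈ I) : k < A.length := by
  obtain ⟨-, hlen, hget⟩ := isApp_iff.1 h
  obtain ⟨t, ht, rfl⟩ := getElem_of_mem hk
  have := (hget t ht).trans (getElem?_eq_getElem (hlen ▸ ht))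
  exact (List.getElem?_eq_some_iff.1 this).1

lemma append_right (h : IsApp A P I) (R : List σ) : IsApp (A ++ R) P I := by
  obtain ⟨hchain, hlen, hget⟩ := isApp_iff.1 h
  refine isApp_iff.2 ⟨hchain, hlen, fun t ht => ?_⟩
  rw [getElem?_append_left (h.lt_length (getElem_mem ht))]
  exact hget t ht

lemma append_left (h : IsApp A P I) (L : List σ) :
    IsApp (L ++ A) P (I.map (L.length + ·)) := by
  obtain ⟨hchain, hlen, hget⟩ := isApp_iff.1 h
  refine isApp_iff.2 ⟨(isChain_map _).2 <| hchain.imp fun _ _ => (Nat.add_lt_add_left · _),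
    by simpa using hlen, fun t ht => ?_⟩
  rw [length_map] at ht
  simpa [getElem?_append_right] using hget t ht

lemma ne_nil (h : IsApp A P I) (hP : P ≠ []) : I ≠ [] := by
  rintro rfl
  exact hP (length_eq_zero_iff.1 h.2.1.symm)

lemma head_le_getLast (h : IsApp A P I) (hI : I ≠ []) : I.head hI ≤ I.getLast hI := by
  have := relationReflTransGen_of_exists_isChain I (h.1.imp fun _ _ => le_of_lt) hI
  rwa [Relation.reflTransGen_eq_self] at this

end IsApp

lemma exists_isApp_of_sublist {σ : Type} {A P : List σ} (h : P <+ A) : ∃ I, IsApp A P I := by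
  obtain ⟨f, hf⟩ := sublist_iff_exists_orderEmbedding_getElem?_eq.1 h
  refine ⟨(range P.length).map f, isApp_iff.2 ⟨?_, by simp, fun t ht => ?_⟩⟩
  · exact (isChain_map _).2 <| (isChain_range _ _).2 fun _ _ => f.strictMono (Nat.lt_succ_self _)
  · simp [hf t]

lemma exists_isApp_of_append_sublist {σ : Type} {A al P ga : List σ} (hP : P ≠ [])
    (h : al ++ P ++ ga <+ A) :
    ∃ i i' : ℕ, i ≤ i' ∧
      (∃ I : List ℕ, IsApp A P I ∧ I.head? = some i ∧ I.getLast? = some i') ∧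
      al <+ A.take i ∧ ga <+ A.drop (i' + 1) := by
  obtain ⟨A₁, A₂₃, rfl, hal, h₂₃⟩ := append_sublist_iff.1 (append_assoc .. ▸ h)
  obtain ⟨A₂, A₃, rfl, hPA₂, hga⟩ := append_sublist_iff.1 h₂₃
  obtain ⟨I₀, hI₀⟩ := exists_isApp_of_sublist hPA₂
  have hI : IsApp (A₁ ++ (A₂ ++ A₃)) P (I₀.map (A₁.length + ·)) :=
    (hI₀.append_right A₃).append_left A₁
  have hne := hI.ne_nil hP
  refine ⟨_, _, hI.head_le_getLast hne,
    ⟨_, hI, head?_eq_some_head hne, getLast?_eq_some_getLast hne⟩, ?_, ?_⟩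
  · have hi : A₁.length ≤ (I₀.map (A₁.length + ·)).head hne := by simp
    rw [take_append, take_of_length_le hi]
    exact hal.trans (sublist_append_left _ _)
  · have hi' : (I₀.map (A₁.length + ·)).getLast hne + 1 ≤ A₁.length + A₂.length := by
      rw [getLast_map]
      have := hI₀.lt_length (getLast_mem (hI₀.ne_nil hP))
      omega
    rw [← append_assoc, drop_append, Nat.sub_eq_zero_of_le (by simpa using hi'), drop_zero]
    exact hga.trans (sublist_append_right _ _)

theorem stmt13 {σ : Type} [DecidableEq σ] (A B P C al ga : List σ) (hP : P ≠ [])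
    (hC : C = al ++ P ++ ga) (hA : C.Sublist A) (hB : C.Sublist B) :
    ∃ i i' j j' : ℕ, i ≤ i' ∧ j ≤ j' ∧
      (∃ I : List ℕ, IsApp A P I ∧ I.head? = some i ∧ I.getLast? = some i') ∧
      (∃ J : List ℕ, IsApp B P J ∧ J.head? = some j ∧ J.getLast? = some j') ∧
      al.length ≤ LLCS (A.take i) (B.take j) ∧
      ga.length ≤ LLCS (A.drop (i' + 1)) (B.drop (j' + 1)) ∧
      C.length ≤ LLCS (A.take i) (B.take j) + P.length +
        LLCS (A.drop (i' + 1)) (B.drop (j' + 1)) := by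
  subst hC
  obtain ⟨i, i', hii', hI, halA, hgaA⟩ := exists_isApp_of_append_sublist hP hA
  obtain ⟨j, j', hjj', hJ, halB, hgaB⟩ := exists_isApp_of_append_sublist hP hB
  have hal := length_le_LLCS halA halB
  have hga := length_le_LLCS hgaA hgaB
  refine ⟨i, i', j, j', hii', hjj', hI, hJ, hal, hga, ?_⟩
  simp only [length_append]
  omega
end

section
/- If C is a sublist of A witnessed by index sequence I, and a contiguous block of C equals P occupying indices i_q, ..., i_{q+r-1} in I, then replacing that block of indices by the compact appearance of P in A starting at i_q yields another valid witness that C is a sublist of A (Lemma 1 of the paper, single-sequence version). -/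
/-! The greedy appearance of `P` from position `i_q` stays index-wise at or before the old block
`i_q, …, i_{q+r-1}`: both start at `i_q`, and if the greedy index at step `t` is at most
`i_{q+t} < i_{q+t+1}`, then `i_{q+t+1}` is a candidate for the greedy choice at step `t + 1`.
So the new block starts where the old one did and ends no later, which keeps the spliced sequence
strictly increasing; it reads the same letters because both blocks spell `P`. -/

theorem List.Pairwise.lt_replace_middle {α : Type*} [Preorder α] {L M M' R : List α}
    (h : (L ++ M ++ R).Pairwise (· < ·)) (hM' : M'.Pairwise (· < ·))
    (hhead : M'.head? = M.head?) (hle : ∀ y ∈ M', ∃ z ∈ M, y ≤ z) :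
    (L ++ M' ++ R).Pairwise (· < ·) := by
  simp only [List.pairwise_append, List.mem_append] at h ⊢
  obtain ⟨⟨hL, -, hLM⟩, hR, hLMR⟩ := h
  refine ⟨⟨hL, hM', fun x hx y hy => ?_⟩, hR, ?_⟩
  · cases M' with
    | nil => simp at hy
    | cons a M'' =>
      have ha : a ∈ M := List.mem_of_mem_head? hhead.symm
      rcases List.mem_cons.1 hy with rfl | hy
      · exact hLM x hx y ha
      · exact (hLM x hx a ha).trans (List.rel_of_pairwise_cons hM' hy)
  · rintro x (hx | hx) y hy
    · exact hLMR x (Or.inl hx) y hy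
    · obtain ⟨z, hz, hxz⟩ := hle x hx
      exact hxz.trans_lt (hLMR z (Or.inr hz) y hy)

variable {σ : Type}

theorem isApp_iff_pairwise_map {A P : List σ} {I : List ℕ} :
    IsApp A P I ↔ I.Pairwise (· < ·) ∧ I.map (A[·]?) = P.map some := by
  refine and_congr List.isChain_iff_pairwise ?_
  rw [List.ext_getElem_iff]
  simp only [List.length_map, List.getElem_map]
  refine and_congr_right fun hlen => ⟨fun h t h₁ h₂ => ?_, fun h t ht => ?_⟩
  · simpa [List.getD_eq_getElem, h₁, h₂] using h t h₁
  · simpa [List.getD_eq_getElem, ht, hlen ▸ ht] using h t ht (hlen ▸ ht)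

theorem IsGreedy.getElem_le {A P : List σ} {G J : List ℕ} (hG : IsGreedy A P G)
    (hJ : IsApp A P J) (hhead : G.head? = J.head?) :
    ∀ t (h₁ : t < G.length) (h₂ : t < J.length), G[t] ≤ J[t]
  | 0, h₁, h₂ => by
    simp only [List.head?_eq_getElem?, h₁, getElem?_pos, h₂, Option.some.injEq] at hhead
    exact hhead.le
  | t + 1, h₁, h₂ => by
    have hprev := hG.getElem_le hJ hhead t (by omega) (by omega)
    have hstep : J[t] < J[t + 1] :=
      List.pairwise_iff_getElem.1 (isApp_iff_pairwise_map.1 hJ).1 t (t + 1) _ _ (by omega)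
    have hletter := hJ.2.2 (t + 1) h₂
    have hgreedy := hG.2 t h₁ J[t + 1]
    rw [List.getD_eq_getElem _ _ h₂] at hletter
    rw [List.getD_eq_getElem _ _ h₁, List.getD_eq_getElem _ _ (by omega)] at hgreedy
    exact hgreedy (hprev.trans_lt hstep) hletter

theorem stmt14 {σ : Type} (A C P al ga : List σ) (hC : C = al ++ P ++ ga)
    (I I' : List ℕ) (hI : IsApp A C I)
    (hI' : IsGreedy A P I') (hhead : I'.head? = I[al.length]?) :
    IsApp A C (I.take al.length ++ I' ++ I.drop (al.length + P.length)) := by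
  subst hC
  set J := (I.drop al.length).take P.length
  have hsplit : I = I.take al.length ++ J ++ I.drop (al.length + P.length) := by
    rw [List.append_assoc, ← List.drop_drop, List.take_append_drop, List.take_append_drop]
  rw [isApp_iff_pairwise_map] at hI ⊢
  have hJ : IsApp A P J := isApp_iff_pairwise_map.2
    ⟨hI.1.sublist ((List.take_sublist _ _).trans (List.drop_sublist _ _)), by
      simp [J, List.map_take, List.map_drop, hI.2]⟩
  have hI'len : I'.length = P.length := hI'.1.2.1
  have hJhead : I'.head? = J.head? := by
    rcases Nat.eq_zero_or_pos P.length with hr | hr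
    · simp [J, hr, List.length_eq_zero_iff.1 (hI'len.trans hr)]
    · simp [J, List.head?_take, hr.ne', hhead]
  have hbelow : ∀ y ∈ I', ∃ z ∈ J, y ≤ z := by
    intro y hy
    obtain ⟨t, ht, rfl⟩ := List.mem_iff_getElem.1 hy
    have ht' : t < J.length := hJ.2.1 ▸ hI'len ▸ ht
    exact ⟨J[t], List.getElem_mem ht', hI'.getElem_le hJ hJhead t ht ht'⟩
  obtain ⟨hI'sorted, hI'map⟩ := isApp_iff_pairwise_map.1 hI'.1
  refine ⟨(hsplit ▸ hI.1).lt_replace_middle hI'sorted hJhead hbelow, ?_⟩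
  simp [List.map_take, List.map_drop, hI.2, hI'map, List.drop_append]
end
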